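/- arXiv:2102.08975 — 2 statements merged into one kernel-verified Lean document; each statement's English description precedes it below -/
import Mathlib

section
/- Define Γ_t(a) = π^e(a∣X_t) 1[A_t = a] (Y_t(a) − f*(a,X_t)) / ᾱ(a∣X_t) + π^e(a∣X_t) f*(a,X_t) and Z_t = Σ_{a=1}^K Γ_t(a) − R(π^e), where ᾱ : 𝒜 × 𝒳 → (0,1) is any measurable function with |π^e(a∣x)/ᾱ(a∣x)| bounded. Then for every t, E[Z_t ∣ Ω_{t-1}] = 0 almost surely; that is, {Z_t}_{t≥1} is a martingale difference sequence with respect to the filtration {Ω_t}. -/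
/-!
Split `Z_t` into the inverse-propensity terms and the direct term `∑ a, π^e(a | X_t) f*(a, X_t)`.
Given `Ω_{t-1}` and `X_t`, each inverse-propensity term is a bounded `X_t`-measurable weight
times `1[A_t = a] (Y_t(a) - f*(a, X_t))`, whose conditional expectation vanishes by
unconfoundedness; the tower property carries this down to `Ω_{t-1}`. The direct term is a
function of `X_t` alone, which is independent of `Ω_{t-1}` with law `ν`, so its conditional
expectation is the constant `R(π^e)`.
-/

open MeasureTheory ProbabilityTheory Filter
open scoped NNReal ENNReal Topology

noncomputable section

namespace MeasureTheory

variable {Ω : Type*} {m m' mΩ : MeasurableSpace Ω} {μ : Measure Ω}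

theorem Integrable.ite_eq_mul {α : Type*} [MeasurableSpace α] [MeasurableSingletonClass α]
    [DecidableEq α] {h : Ω → ℝ} (hh : Integrable h μ) {A : Ω → α} (hA : Measurable A) (a : α) :
    Integrable (fun ω => (if A ω = a then (1 : ℝ) else 0) * h ω) μ := by
  refine hh.bdd_mul (c := 1) (Measurable.ite (hA (measurableSet_singleton a)) measurable_const
    measurable_const).aestronglyMeasurable (ae_of_all _ fun ω => ?_)
  split_ifs <;> simp

theorem condExp_mul_ae_eq_zero_of_condExp_ae_eq_zero [IsFiniteMeasure μ] (hm : m ≤ m')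
    (hm' : m' ≤ mΩ) {g q : Ω → ℝ} (hg : StronglyMeasurable[m'] g) {C : ℝ}
    (hgC : ∀ ω, ‖g ω‖ ≤ C) (hq : Integrable q μ) (hq0 : μ[q | m'] =ᵐ[μ] 0) :
    μ[g * q | m] =ᵐ[μ] 0 := by
  have hgq : Integrable (g * q) μ :=
    hq.bdd_mul (hg.mono hm').aestronglyMeasurable (ae_of_all _ hgC)
  calc μ[g * q | m] =ᵐ[μ] μ[μ[g * q | m'] | m] := (condExp_condExp_of_le hm hm').symm
    _ =ᵐ[μ] μ[g * μ[q | m'] | m] :=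
      condExp_congr_ae (condExp_mul_of_stronglyMeasurable_left hg hgq hq)
    _ =ᵐ[μ] μ[0 | m] := condExp_congr_ae (by filter_upwards [hq0] with ω h; simp [h])
    _ = 0 := condExp_zero

theorem condExp_comp_ae_eq_integral_map_of_indep [IsFiniteMeasure μ] {𝒳 : Type*}
    [m𝒳 : MeasurableSpace 𝒳] (hm : m ≤ mΩ) {X : Ω → 𝒳} (hX : Measurable X) {h : 𝒳 → ℝ}
    (hh : Measurable h) (hindep : Indep (m𝒳.comap X) m μ) :
    μ[h ∘ X | m] =ᵐ[μ] fun _ => ∫ x, h x ∂(μ.map X) := by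
  rw [integral_map hX.aemeasurable hh.aestronglyMeasurable]
  exact condExp_indep_eq hX.comap_le hm (hh.comp (comap_measurable X)).stronglyMeasurable hindep

theorem condExp_sum_add_sub_ae_eq_zero [IsFiniteMeasure μ] (hm : m ≤ mΩ) {ι : Type*}
    {s : Finset ι} {F G : ι → Ω → ℝ} {c : ℝ} (hF : ∀ i ∈ s, Integrable (F i) μ)
    (hG : ∀ i ∈ s, Integrable (G i) μ) (hF0 : ∀ i ∈ s, μ[F i | m] =ᵐ[μ] 0)
    (hGc : μ[fun ω => ∑ i ∈ s, G i ω | m] =ᵐ[μ] fun _ => c) :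
    μ[fun ω => ∑ i ∈ s, (F i ω + G i ω) - c | m] =ᵐ[μ] 0 := by
  have hFs : μ[∑ i ∈ s, F i | m] =ᵐ[μ] 0 := by
    filter_upwards [condExp_finsetSum hF m, (eventually_all_finset s).2 hF0] with ω hω hω0
    simp [hω, Finset.sum_apply, Finset.sum_eq_zero hω0]
  have hsplit : (fun ω => ∑ i ∈ s, (F i ω + G i ω) - c)
      = ∑ i ∈ s, F i + (fun ω => ∑ i ∈ s, G i ω) - fun _ => c := by
    funext ω
    simp [Finset.sum_add_distrib, Finset.sum_apply]
  rw [hsplit]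
  filter_upwards [condExp_sub ((integrable_finsetSum' s hF).add (integrable_finsetSum s hG))
      (integrable_const c) m, condExp_add (integrable_finsetSum' s hF)
      (integrable_finsetSum s hG) m, hFs, hGc] with ω h₁ h₂ h₃ h₄
  simp [h₁, h₂, h₃, h₄, condExp_const hm]

end MeasureTheory

theorem score_is_martingale_difference_sequence_general
    {Ω : Type*} [mΩ : MeasurableSpace Ω] (μ : Measure Ω) [IsProbabilityMeasure μ]
    {𝒳 : Type*} [mX : MeasurableSpace 𝒳]
    {K : ℕ}
    (ℱ : MeasureTheory.Filtration ℕ mΩ)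
    (X : ℕ → Ω → 𝒳) (A : ℕ → Ω → Fin K) (Y : ℕ → Fin K → Ω → ℝ)
    (ν : Measure 𝒳)
    (πe : Fin K → 𝒳 → ℝ) (fstar : Fin K → 𝒳 → ℝ)
    (Rval : ℝ)
    -- measurability and adaptedness of the data-generating process
    (hXmeas : ∀ t, Measurable (X t))
    (hAmeas : ∀ t, Measurable (A t))
    (hYmeas : ∀ t a, Measurable (Y t a))
    (hπemeas : ∀ a, Measurable (πe a))
    (hfstarmeas : ∀ a, Measurable (fstar a))
    (Cπe : ℝ) (hπebdd : ∀ a x, |πe a x| ≤ Cπe)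
    -- the covariates are i.i.d. with law ν and independent of the past
    (hXlaw : ∀ t, μ.map (X t) = ν)
    (hXindep : ∀ t, ProbabilityTheory.Indep (MeasurableSpace.comap (X t) mX) (ℱ t) μ)
    -- conditional mean of the potential outcomes, time-invariant
    (hfstarcond : ∀ t a,
      μ[Y t a | MeasurableSpace.comap (X t) mX] =ᵐ[μ] fun ω => fstar a (X t ω))
    -- unconfoundedness: A_t ⫫ Y_t(a) given (X_t, Ω_{t-1})
    (hunconf : ∀ t a,
      μ[(fun ω => (if A t ω = a then (1:ℝ) else 0) * (Y t a ω - fstar a (X t ω)))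
          | ℱ t ⊔ MeasurableSpace.comap (X t) mX] =ᵐ[μ] fun _ => 0)
    -- the mean outcome R(π^e) = E[Σ_a π^e(a|X) Y(a)]
    (hR : Rval = ∫ x, (∑ a, πe a x * fstar a x) ∂ν)
    -- Assumption 1: bounded potential outcomes
    (C_Y : ℝ) (hYbdd : ∀ t a, ∀ᵐ ω ∂μ, |Y t a ω| ≤ C_Y)
    -- a measurable weight ᾱ with values in (0,1) and bounded ratio π^e/ᾱ
    (αbar : Fin K → 𝒳 → ℝ)
    (hαmeas : ∀ a, Measurable (αbar a))
    (C_α : ℝ) (hCα : ∀ a x, |πe a x / αbar a x| ≤ C_α)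
 :
    -- conclusion: E[Z_t | Ω_{t-1}] = 0 almost surely, for every t
    ∀ t, μ[(fun ω =>
        (∑ a, (πe a (X t ω) * (if A t ω = a then (1:ℝ) else 0) *
            (Y t a ω - fstar a (X t ω)) / αbar a (X t ω)
          + πe a (X t ω) * fstar a (X t ω))) - Rval) | ℱ t]
      =ᵐ[μ] fun _ => 0 := by
  intro t
  have hf_int (a : Fin K) : Integrable (fun ω => fstar a (X t ω)) μ :=
    integrable_condExp.congr (hfstarcond t a)
  have hq_int (a : Fin K) : Integrable
      (fun ω => (if A t ω = a then (1:ℝ) else 0) * (Y t a ω - fstar a (X t ω))) μ :=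
    ((Integrable.of_bound (hYmeas t a).aestronglyMeasurable C_Y (hYbdd t a)).sub
      (hf_int a)).ite_eq_mul (hAmeas t) a
  have hZ : (fun ω => (∑ a, (πe a (X t ω) * (if A t ω = a then (1:ℝ) else 0) *
        (Y t a ω - fstar a (X t ω)) / αbar a (X t ω) + πe a (X t ω) * fstar a (X t ω))) - Rval)
      = fun ω => (∑ a, (πe a (X t ω) / αbar a (X t ω) *
        ((if A t ω = a then (1:ℝ) else 0) * (Y t a ω - fstar a (X t ω)))
          + πe a (X t ω) * fstar a (X t ω))) - Rval := by
    funext ω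
    congr 1
    exact Finset.sum_congr rfl fun a _ => by ring
  rw [hZ]
  refine condExp_sum_add_sub_ae_eq_zero (ℱ.le t) (fun a _ => ?_) (fun a _ => ?_)
    (fun a _ => ?_) ?_
  · exact (hq_int a).bdd_mul (((hπemeas a).div (hαmeas a)).comp (hXmeas t)).aestronglyMeasurable
      (ae_of_all _ fun ω => hCα a (X t ω))
  · exact (hf_int a).bdd_mul ((hπemeas a).comp (hXmeas t)).aestronglyMeasurable
      (ae_of_all _ fun ω => hπebdd a (X t ω))
  · have hX : Measurable[MeasurableSpace.comap (X t) mX] (X t) := comap_measurable (X t)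
    exact condExp_mul_ae_eq_zero_of_condExp_ae_eq_zero le_sup_left
      (sup_le (ℱ.le t) (hXmeas t).comap_le)
      ((((hπemeas a).comp hX).div ((hαmeas a).comp hX)).mono
        (le_sup_right (a := (ℱ t : MeasurableSpace Ω))) le_rfl).stronglyMeasurable
      (fun ω => hCα a (X t ω)) (hq_int a) (hunconf t a)
  · rw [hR, ← hXlaw t]
    exact condExp_comp_ae_eq_integral_map_of_indep (ℱ.le t) (hXmeas t)
      (Finset.measurable_sum _ fun a _ => (hπemeas a).mul (hfstarmeas a)) (hXindep t)

theorem score_is_martingale_difference_sequence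
    {Ω : Type*} [mΩ : MeasurableSpace Ω] (μ : Measure Ω) [IsProbabilityMeasure μ]
    {𝒳 : Type*} [mX : MeasurableSpace 𝒳]
    {K : ℕ} (hK : 0 < K)
    (ℱ : MeasureTheory.Filtration ℕ mΩ)
    (X : ℕ → Ω → 𝒳) (A : ℕ → Ω → Fin K) (Y : ℕ → Fin K → Ω → ℝ)
    (ν : Measure 𝒳) [IsProbabilityMeasure ν]
    (πpol : ℕ → Fin K → 𝒳 → Ω → ℝ)
    (πe : Fin K → 𝒳 → ℝ) (fstar : Fin K → 𝒳 → ℝ)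
    (Rval : ℝ)
    -- measurability and adaptedness of the data-generating process
    (hXmeas : ∀ t, Measurable (X t))
    (hAmeas : ∀ t, Measurable (A t))
    (hYmeas : ∀ t a, Measurable (Y t a))
    (hXadapt : ∀ t, Measurable[ℱ (t+1)] (X t))
    (hAadapt : ∀ t, Measurable[ℱ (t+1)] (A t))
    (hYadapt : ∀ t a, Measurable[ℱ (t+1)] (Y t a))
    (hπemeas : ∀ a, Measurable (πe a))
    (hfstarmeas : ∀ a, Measurable (fstar a))
    (Cπe : ℝ) (hπebdd : ∀ a x, |πe a x| ≤ Cπe)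
    -- the covariates are i.i.d. with law ν and independent of the past
    (hXlaw : ∀ t, μ.map (X t) = ν)
    (hXindep : ∀ t, ProbabilityTheory.Indep (MeasurableSpace.comap (X t) mX) (ℱ t) μ)
    -- the logging policy is a function of the history only
    (hπpolmeas : ∀ t a x, Measurable[ℱ t] (πpol t a x))
    (hπpoljm : ∀ t a, Measurable fun p : 𝒳 × Ω => πpol t a p.1 p.2)
    (hπpolrange : ∀ t a x ω, πpol t a x ω ∈ Set.Icc (0:ℝ) 1)
    -- P(A_t = a | X_t, Ω_{t-1}) = π_t(a | X_t, Ω_{t-1})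
    (hpolicy : ∀ t a,
      μ[(fun ω => if A t ω = a then (1:ℝ) else 0) | ℱ t ⊔ MeasurableSpace.comap (X t) mX]
        =ᵐ[μ] fun ω => πpol t a (X t ω) ω)
    -- conditional mean of the potential outcomes, time-invariant
    (hfstarcond : ∀ t a,
      μ[Y t a | MeasurableSpace.comap (X t) mX] =ᵐ[μ] fun ω => fstar a (X t ω))
    -- unconfoundedness: A_t ⫫ Y_t(a) given (X_t, Ω_{t-1})
    (hunconf : ∀ t a,
      μ[(fun ω => (if A t ω = a then (1:ℝ) else 0) * (Y t a ω - fstar a (X t ω)))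
          | ℱ t ⊔ MeasurableSpace.comap (X t) mX] =ᵐ[μ] fun _ => 0)
    -- the mean outcome R(π^e) = E[Σ_a π^e(a|X) Y(a)]
    (hR : Rval = ∫ x, (∑ a, πe a x * fstar a x) ∂ν)
    -- Assumption 1: bounded potential outcomes
    (C_Y : ℝ) (hYbdd : ∀ t a, ∀ᵐ ω ∂μ, |Y t a ω| ≤ C_Y)
    -- a measurable weight ᾱ with values in (0,1) and bounded ratio π^e/ᾱ
    (αbar : Fin K → 𝒳 → ℝ)
    (hαmeas : ∀ a, Measurable (αbar a))
    (hαrange : ∀ a x, αbar a x ∈ Set.Ioo (0:ℝ) 1)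
    (C_α : ℝ) (hCα : ∀ a x, |πe a x / αbar a x| ≤ C_α)
 :
    -- conclusion: E[Z_t | Ω_{t-1}] = 0 almost surely, for every t
    ∀ t, μ[(fun ω =>
        (∑ a, (πe a (X t ω) * (if A t ω = a then (1:ℝ) else 0) *
            (Y t a ω - fstar a (X t ω)) / αbar a (X t ω)
          + πe a (X t ω) * fstar a (X t ω))) - Rval) | ℱ t]
      =ᵐ[μ] fun _ => 0 :=
  score_is_martingale_difference_sequence_general (mΩ := mΩ) μ (mX := mX) ℱ X A Y ν πe fstar Rval
    hXmeas hAmeas hYmeas hπemeas hfstarmeas Cπe hπebdd hXlaw hXindep hfstarcond hunconf hR C_Y hYbdd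
    αbar hαmeas C_α hCα
end
end

section
/- Define Γ_t(a) = π^e(a∣X_t) 1[A_t = a] (Y_t(a) − f*(a,X_t)) / ᾱ(a∣X_t) + π^e(a∣X_t) f*(a,X_t) and Z_t = Σ_{a=1}^K Γ_t(a) − R(π^e), where ᾱ : 𝒜 × 𝒳 → (0,1) is measurable with |π^e(a∣x)/ᾱ(a∣x)| bounded. Then the second moment of Z_t equals E[Z_t²] = E[ Σ_{a=1}^K (π^e(a∣X_t))² π_t(a∣X_t, Ω_{t-1}) v*(a,X_t) / ᾱ(a∣X_t)² + ( Σ_{a=1}^K π^e(a∣X_t) f*(a,X_t) − R(π^e) )² ]. -/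
/-!
Write `Z_t = ∑ₐ wₐ 1[A_t = a] εₐ + D` with `wₐ = π^e(a|X_t) / ᾱ(a|X_t)`,
`εₐ = Y_t(a) - f*(a, X_t)` and `D = ∑ₐ π^e(a|X_t) f*(a, X_t) - R`. The indicators are
orthogonal, so `Z_t² = ∑ₐ wₐ² 1[A_t = a] εₐ² + 2 D ∑ₐ wₐ 1[A_t = a] εₐ + D²`. The weights and
`D` are measurable for `Ω_{t-1} ∨ σ(X_t)`; conditioning on it replaces `1[A_t = a] εₐ²` by
`π_t v*` and, by unconfoundedness, kills the cross term. Every term is integrable because `Y`, and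
hence its conditional mean `f*`, is bounded.
-/

open MeasureTheory Filter
open scoped ENNReal

theorem integral_mul_eq_integral_mul_of_condExp_ae_eq {Ω : Type*} {m mΩ : MeasurableSpace Ω}
    {μ : Measure Ω} [IsFiniteMeasure μ] (hm : m ≤ mΩ) {f g h : Ω → ℝ}
    (hf : StronglyMeasurable[m] f) (hfLp : MemLp f ∞ μ) (hg : Integrable g μ)
    (hgh : μ[g | m] =ᵐ[μ] h) :
    ∫ ω, f ω * g ω ∂μ = ∫ ω, f ω * h ω ∂μ :=
  calc ∫ ω, f ω * g ω ∂μ = ∫ ω, (μ[f * g | m]) ω ∂μ := (integral_condExp hm).symm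
    _ = ∫ ω, f ω * h ω ∂μ :=
      integral_congr_ae <|
        (condExp_mul_of_stronglyMeasurable_left hf (hg.mul_of_top_right hfLp) hg).trans <|
          EventuallyEq.rfl.mul hgh

theorem sq_sum_ite_mul_add {R ι : Type*} [CommRing R] [Fintype ι] [DecidableEq ι]
    (i : ι) (w e : ι → R) (d : R) :
    (∑ a, w a * ((if i = a then 1 else 0) * e a) + d) ^ 2
      = ∑ a, w a ^ 2 * ((if i = a then 1 else 0) * e a ^ 2)
        + ∑ a, 2 * w a * d * ((if i = a then 1 else 0) * e a) + d ^ 2 := by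
  simp only [ite_mul, one_mul, zero_mul, mul_ite, mul_zero, Finset.sum_ite_eq,
    Finset.mem_univ, if_true]
  ring

namespace MeasureTheory.MemLp

variable {Ω : Type*} {mΩ : MeasurableSpace Ω} {μ : Measure Ω} {f g : Ω → ℝ}

theorem mul_top (hf : MemLp f ∞ μ) (hg : MemLp g ∞ μ) : MemLp (fun ω => f ω * g ω) ∞ μ :=
  hg.mul' hf

theorem pow_top (hf : MemLp f ∞ μ) (n : ℕ) : MemLp (fun ω => f ω ^ n) ∞ μ := by
  induction n with
  | zero => simpa only [pow_zero] using memLp_top_const 1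
  | succ n ih => simpa only [pow_succ] using ih.mul_top hf

theorem ite_one_zero_mul {ι : Type*} [DecidableEq ι] [MeasurableSpace ι]
    [MeasurableSingletonClass ι] (hf : MemLp f ∞ μ) {A : Ω → ι} (hA : Measurable A) (a : ι) :
    MemLp (fun ω => (if A ω = a then (1 : ℝ) else 0) * f ω) ∞ μ :=
  (memLp_top_of_bound
    (measurable_const.ite (hA (measurableSet_singleton a)) measurable_const).aestronglyMeasurable 1
    (ae_of_all _ fun ω => by split_ifs <;> simp)).mul_top hf

end MeasureTheory.MemLp

theorem memLp_top_comp_of_abs_le {Ω 𝒳 : Type*} {mΩ : MeasurableSpace Ω} [MeasurableSpace 𝒳]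
    {μ : Measure Ω} {g : 𝒳 → ℝ} (hg : Measurable g) {X : Ω → 𝒳} (hX : Measurable X) {C : ℝ}
    (hC : ∀ x, |g x| ≤ C) : MemLp (fun ω => g (X ω)) ∞ μ :=
  memLp_top_of_bound (hg.comp hX).aestronglyMeasurable C (ae_of_all _ fun ω => hC (X ω))

theorem Measurable.stronglyMeasurable_sup_comap {Ω 𝒳 : Type*} [mX : MeasurableSpace 𝒳]
    {g : 𝒳 → ℝ} (hg : Measurable g) (m : MeasurableSpace Ω) (X : Ω → 𝒳) :
    StronglyMeasurable[m ⊔ mX.comap X] (fun ω => g (X ω)) :=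
  ((hg.comp (comap_measurable X)).mono (le_sup_right (a := m)) le_rfl).stronglyMeasurable

section WeightedResidual

variable {Ω ι : Type*} {m mΩ : MeasurableSpace Ω} {μ : Measure Ω} [IsFiniteMeasure μ]
  [Fintype ι] [DecidableEq ι] [MeasurableSpace ι] [MeasurableSingletonClass ι]
  {A : Ω → ι} {w e : ι → Ω → ℝ} {d : Ω → ℝ}

theorem integral_sq_sum_ite_mul_add (hA : Measurable A) (hwLp : ∀ a, MemLp (w a) ∞ μ)
    (hdLp : MemLp d ∞ μ) (heLp : ∀ a, MemLp (e a) ∞ μ) :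
    ∫ ω, (∑ a, w a ω * ((if A ω = a then 1 else 0) * e a ω) + d ω) ^ 2 ∂μ
      = ∑ a, ∫ ω, w a ω ^ 2 * ((if A ω = a then 1 else 0) * e a ω ^ 2) ∂μ
        + ∑ a, ∫ ω, 2 * w a ω * d ω * ((if A ω = a then 1 else 0) * e a ω) ∂μ
        + ∫ ω, d ω ^ 2 ∂μ := by
  have hP : ∀ a, Integrable (fun ω => w a ω ^ 2 * ((if A ω = a then 1 else 0) * e a ω ^ 2)) μ :=
    fun a => (((hwLp a).pow_top 2).mul_top (((heLp a).pow_top 2).ite_one_zero_mul hA a)).integrable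
      le_top
  have hQ : ∀ a, Integrable (fun ω => 2 * w a ω * d ω * ((if A ω = a then 1 else 0) * e a ω)) μ :=
    fun a => ((((hwLp a).const_mul 2).mul_top hdLp).mul_top
      ((heLp a).ite_one_zero_mul hA a)).integrable le_top
  have hPs := integrable_finsetSum Finset.univ fun a _ => hP a
  have hQs := integrable_finsetSum Finset.univ fun a _ => hQ a
  rw [integral_congr_ae <| ae_of_all _ fun ω => sq_sum_ite_mul_add (A ω) (w · ω) (e · ω) (d ω),
    integral_add (f := fun ω => _ + _) (hPs.add hQs) ((hdLp.pow_top 2).integrable le_top),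
    integral_add hPs hQs, integral_finsetSum _ fun a _ => hP a,
    integral_finsetSum _ fun a _ => hQ a]

theorem integral_sq_weighted_residual_add {s : ι → Ω → ℝ} (hm : m ≤ mΩ) (hA : Measurable A)
    (hw : ∀ a, StronglyMeasurable[m] (w a)) (hwLp : ∀ a, MemLp (w a) ∞ μ)
    (hd : StronglyMeasurable[m] d) (hdLp : MemLp d ∞ μ) (heLp : ∀ a, MemLp (e a) ∞ μ)
    (he : ∀ a, μ[fun ω => (if A ω = a then (1 : ℝ) else 0) * e a ω | m] =ᵐ[μ] fun _ => 0)
    (hs : ∀ a, μ[fun ω => (if A ω = a then (1 : ℝ) else 0) * e a ω ^ 2 | m] =ᵐ[μ] s a) :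
    ∫ ω, (∑ a, w a ω * ((if A ω = a then 1 else 0) * e a ω) + d ω) ^ 2 ∂μ
      = ∫ ω, (∑ a, w a ω ^ 2 * s a ω + d ω ^ 2) ∂μ := by
  have hvar : ∀ a, ∫ ω, w a ω ^ 2 * ((if A ω = a then 1 else 0) * e a ω ^ 2) ∂μ
      = ∫ ω, w a ω ^ 2 * s a ω ∂μ := fun a =>
    integral_mul_eq_integral_mul_of_condExp_ae_eq hm ((hw a).pow 2) ((hwLp a).pow_top 2)
      ((((heLp a).pow_top 2).ite_one_zero_mul hA a).integrable le_top) (hs a)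
  have hcov : ∀ a, ∫ ω, 2 * w a ω * d ω * ((if A ω = a then 1 else 0) * e a ω) ∂μ = 0 :=
    fun a => by
      simpa only [Pi.mul_apply, mul_zero, integral_zero] using
        integral_mul_eq_integral_mul_of_condExp_ae_eq hm (((hw a).const_mul 2).mul hd)
          (((hwLp a).const_mul 2).mul_top hdLp)
          (((heLp a).ite_one_zero_mul hA a).integrable le_top) (he a)
  have hws : ∀ a, Integrable (fun ω => w a ω ^ 2 * s a ω) μ := fun a =>
    (integrable_condExp.congr (hs a)).mul_of_top_right ((hwLp a).pow_top 2)
  rw [integral_sq_sum_ite_mul_add hA hwLp hdLp heLp,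
    integral_add (integrable_finsetSum _ fun a _ => hws a) ((hdLp.pow_top 2).integrable le_top),
    integral_finsetSum _ fun a _ => hws a]
  simp only [hvar, hcov, Finset.sum_const_zero, add_zero]

end WeightedResidual

theorem score_second_moment_general
    {Ω : Type*} [mΩ : MeasurableSpace Ω] (μ : Measure Ω) [IsProbabilityMeasure μ]
    {𝒳 : Type*} [mX : MeasurableSpace 𝒳]
    {K : ℕ}
    (ℱ : MeasureTheory.Filtration ℕ mΩ)
    (X : ℕ → Ω → 𝒳) (A : ℕ → Ω → Fin K) (Y : ℕ → Fin K → Ω → ℝ)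
    (πpol : ℕ → Fin K → 𝒳 → Ω → ℝ)
    (πe : Fin K → 𝒳 → ℝ) (fstar : Fin K → 𝒳 → ℝ)
    (Rval : ℝ)
    -- measurability and adaptedness of the data-generating process
    (hXmeas : ∀ t, Measurable (X t))
    (hAmeas : ∀ t, Measurable (A t))
    (hYmeas : ∀ t a, Measurable (Y t a))
    (hπemeas : ∀ a, Measurable (πe a))
    (hfstarmeas : ∀ a, Measurable (fstar a))
    (Cπe : ℝ) (hπebdd : ∀ a x, |πe a x| ≤ Cπe)
    -- conditional mean of the potential outcomes, time-invariant
    (hfstarcond : ∀ t a,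
      μ[Y t a | MeasurableSpace.comap (X t) mX] =ᵐ[μ] fun ω => fstar a (X t ω))
    -- unconfoundedness: A_t ⫫ Y_t(a) given (X_t, Ω_{t-1})
    (hunconf : ∀ t a,
      μ[(fun ω => (if A t ω = a then (1:ℝ) else 0) * (Y t a ω - fstar a (X t ω)))
          | ℱ t ⊔ MeasurableSpace.comap (X t) mX] =ᵐ[μ] fun _ => 0)
    -- Assumption 1: bounded potential outcomes
    (C_Y : ℝ) (hYbdd : ∀ t a, ∀ᵐ ω ∂μ, |Y t a ω| ≤ C_Y)
    -- conditional variance of the potential outcomes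
    (vstar : Fin K → 𝒳 → ℝ)
    (hunconf2 : ∀ t a,
      μ[(fun ω => (if A t ω = a then (1:ℝ) else 0) * (Y t a ω - fstar a (X t ω))^2)
          | ℱ t ⊔ MeasurableSpace.comap (X t) mX]
        =ᵐ[μ] fun ω => πpol t a (X t ω) ω * vstar a (X t ω))
    -- a measurable weight ᾱ with values in (0,1) and bounded ratio π^e/ᾱ
    (αbar : Fin K → 𝒳 → ℝ)
    (hαmeas : ∀ a, Measurable (αbar a))
    (C_α : ℝ) (hCα : ∀ a x, |πe a x / αbar a x| ≤ C_α)
 :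
    -- conclusion: the second moment identity for Z_t
    ∀ t, ∫ ω, ((∑ a, (πe a (X t ω) * (if A t ω = a then (1:ℝ) else 0) *
            (Y t a ω - fstar a (X t ω)) / αbar a (X t ω)
          + πe a (X t ω) * fstar a (X t ω))) - Rval)^2 ∂μ
      = ∫ ω, (∑ a, (πe a (X t ω))^2 * πpol t a (X t ω) ω * vstar a (X t ω) /
            (αbar a (X t ω))^2
          + (∑ a, πe a (X t ω) * fstar a (X t ω) - Rval)^2) ∂μ := by
  intro t
  have hYLp : ∀ a, MemLp (Y t a) ∞ μ := fun a =>
    memLp_top_of_bound (hYmeas t a).aestronglyMeasurable C_Y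
      (by simpa only [Real.norm_eq_abs] using hYbdd t a)
  have hfLp : ∀ a, MemLp (fun ω => fstar a (X t ω)) ∞ μ := fun a =>
    ((hYLp a).condExp le_top).ae_eq (hfstarcond t a)
  have key := integral_sq_weighted_residual_add (sup_le (ℱ.le t) (hXmeas t).comap_le) (hAmeas t)
    (w := fun a ω => πe a (X t ω) / αbar a (X t ω))
    (d := fun ω => ∑ a, πe a (X t ω) * fstar a (X t ω) - Rval)
    (e := fun a ω => Y t a ω - fstar a (X t ω))
    (fun a => ((hπemeas a).div (hαmeas a)).stronglyMeasurable_sup_comap (ℱ t) (X t))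
    (fun a => memLp_top_comp_of_abs_le ((hπemeas a).div (hαmeas a)) (hXmeas t) (hCα a))
    (Measurable.stronglyMeasurable_sup_comap (g := fun x => ∑ a, πe a x * fstar a x - Rval)
      (by fun_prop) (ℱ t) (X t))
    ((memLp_finsetSum _ fun a _ =>
      (memLp_top_comp_of_abs_le (hπemeas a) (hXmeas t) (hπebdd a)).mul_top (hfLp a)).sub
        (memLp_top_const Rval))
    (fun a => (hYLp a).sub (hfLp a)) (hunconf t) (hunconf2 t)
  convert key using 3 with ω
  · rw [Finset.sum_add_distrib, add_sub_assoc]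
    congr 2
    exact Finset.sum_congr rfl fun a _ => by ring
  · congr 1
    exact Finset.sum_congr rfl fun a _ => by ring

theorem score_second_moment
    {Ω : Type*} [mΩ : MeasurableSpace Ω] (μ : Measure Ω) [IsProbabilityMeasure μ]
    {𝒳 : Type*} [mX : MeasurableSpace 𝒳]
    {K : ℕ} (hK : 0 < K)
    (ℱ : MeasureTheory.Filtration ℕ mΩ)
    (X : ℕ → Ω → 𝒳) (A : ℕ → Ω → Fin K) (Y : ℕ → Fin K → Ω → ℝ)
    (ν : Measure 𝒳) [IsProbabilityMeasure ν]
    (πpol : ℕ → Fin K → 𝒳 → Ω → ℝ)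
    (πe : Fin K → 𝒳 → ℝ) (fstar : Fin K → 𝒳 → ℝ)
    (Rval : ℝ)
    -- measurability and adaptedness of the data-generating process
    (hXmeas : ∀ t, Measurable (X t))
    (hAmeas : ∀ t, Measurable (A t))
    (hYmeas : ∀ t a, Measurable (Y t a))
    (hXadapt : ∀ t, Measurable[ℱ (t+1)] (X t))
    (hAadapt : ∀ t, Measurable[ℱ (t+1)] (A t))
    (hYadapt : ∀ t a, Measurable[ℱ (t+1)] (Y t a))
    (hπemeas : ∀ a, Measurable (πe a))
    (hfstarmeas : ∀ a, Measurable (fstar a))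
    (Cπe : ℝ) (hπebdd : ∀ a x, |πe a x| ≤ Cπe)
    -- the covariates are i.i.d. with law ν and independent of the past
    (hXlaw : ∀ t, μ.map (X t) = ν)
    (hXindep : ∀ t, ProbabilityTheory.Indep (MeasurableSpace.comap (X t) mX) (ℱ t) μ)
    -- the logging policy is a function of the history only
    (hπpolmeas : ∀ t a x, Measurable[ℱ t] (πpol t a x))
    (hπpoljm : ∀ t a, Measurable fun p : 𝒳 × Ω => πpol t a p.1 p.2)
    (hπpolrange : ∀ t a x ω, πpol t a x ω ∈ Set.Icc (0:ℝ) 1)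
    -- P(A_t = a | X_t, Ω_{t-1}) = π_t(a | X_t, Ω_{t-1})
    (hpolicy : ∀ t a,
      μ[(fun ω => if A t ω = a then (1:ℝ) else 0) | ℱ t ⊔ MeasurableSpace.comap (X t) mX]
        =ᵐ[μ] fun ω => πpol t a (X t ω) ω)
    -- conditional mean of the potential outcomes, time-invariant
    (hfstarcond : ∀ t a,
      μ[Y t a | MeasurableSpace.comap (X t) mX] =ᵐ[μ] fun ω => fstar a (X t ω))
    -- unconfoundedness: A_t ⫫ Y_t(a) given (X_t, Ω_{t-1})
    (hunconf : ∀ t a,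
      μ[(fun ω => (if A t ω = a then (1:ℝ) else 0) * (Y t a ω - fstar a (X t ω)))
          | ℱ t ⊔ MeasurableSpace.comap (X t) mX] =ᵐ[μ] fun _ => 0)
    -- the mean outcome R(π^e) = E[Σ_a π^e(a|X) Y(a)]
    (hR : Rval = ∫ x, (∑ a, πe a x * fstar a x) ∂ν)
    -- Assumption 1: bounded potential outcomes
    (C_Y : ℝ) (hYbdd : ∀ t a, ∀ᵐ ω ∂μ, |Y t a ω| ≤ C_Y)
    -- conditional variance of the potential outcomes
    (vstar : Fin K → 𝒳 → ℝ)
    (hvstarmeas : ∀ a, Measurable (vstar a))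
    (hvstarcond : ∀ t a,
      μ[(fun ω => (Y t a ω - fstar a (X t ω))^2) | MeasurableSpace.comap (X t) mX]
        =ᵐ[μ] fun ω => vstar a (X t ω))
    (hunconf2 : ∀ t a,
      μ[(fun ω => (if A t ω = a then (1:ℝ) else 0) * (Y t a ω - fstar a (X t ω))^2)
          | ℱ t ⊔ MeasurableSpace.comap (X t) mX]
        =ᵐ[μ] fun ω => πpol t a (X t ω) ω * vstar a (X t ω))
    -- a measurable weight ᾱ with values in (0,1) and bounded ratio π^e/ᾱ
    (αbar : Fin K → 𝒳 → ℝ)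
    (hαmeas : ∀ a, Measurable (αbar a))
    (hαrange : ∀ a x, αbar a x ∈ Set.Ioo (0:ℝ) 1)
    (C_α : ℝ) (hCα : ∀ a x, |πe a x / αbar a x| ≤ C_α)
 :
    -- conclusion: the second moment identity for Z_t
    ∀ t, ∫ ω, ((∑ a, (πe a (X t ω) * (if A t ω = a then (1:ℝ) else 0) *
            (Y t a ω - fstar a (X t ω)) / αbar a (X t ω)
          + πe a (X t ω) * fstar a (X t ω))) - Rval)^2 ∂μ
      = ∫ ω, (∑ a, (πe a (X t ω))^2 * πpol t a (X t ω) ω * vstar a (X t ω) /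
            (αbar a (X t ω))^2
          + (∑ a, πe a (X t ω) * fstar a (X t ω) - Rval)^2) ∂μ :=
  score_second_moment_general (mΩ := mΩ) μ (mX := mX) ℱ X A Y πpol πe fstar Rval hXmeas hAmeas
    hYmeas hπemeas hfstarmeas Cπe hπebdd hfstarcond hunconf C_Y hYbdd vstar hunconf2 αbar hαmeas C_α
    hCα
end
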